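/- arXiv:1004.5453 — 3 statements merged into one kernel-verified Lean document; each statement's English description precedes it below -/
import Mathlib

section
/- (Pliss Lemma) Given 0 < γ₀ < γ₁ < 1 and a > 0, there exist n₀ = n₀(γ₀,γ₁,a) ∈ ℕ and l = l(γ₀,γ₁,a) > 0 such that for any finite sequence (aᵢ)₀≤ᵢ≤ₙ of real numbers with n > n₀, a⁻¹ < aᵢ < a for all i, and ∏ᵢ₌₀ⁿ aᵢ < γ₀ⁿ, there exist indices 1 ≤ n₁ < n₂ < … < n_r ≤ n with r > l·n such that ∏ᵢ₌ₙⱼᵏ aᵢ < γ₁^(k−nⱼ) for every j and every nⱼ ≤ k ≤ n. -/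
/-!
Put `T j = ∑ i < j, (log aᵢ - log γ₁)`. Call `m` a Pliss time if `T k ≤ T m` for all
`m < k ≤ n + 1`; then every tail product `∏ i ∈ [m, k], aᵢ` is at most
`γ₁ ^ (k - m + 1)`. Reading from the right, the running maximum `max_{s ≤ k ≤ n + 1} T k`
is unchanged when `s` is not a Pliss time, and grows by at most `A = |log a| + |log γ₁|`
(a bound for each decrement of `T`) when it is. As `T` drops by more than
`n (log γ₁ - log γ₀) - A` from `1` to `n + 1`, there are more than
`n (log γ₁ - log γ₀) / A - 1` Pliss times, which beats `l n` for large `n`.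
-/

open Finset Real

section PlissTimes

variable {α : Type*}

def IsPlissTime [LE α] (T : ℕ → α) (N m : ℕ) : Prop :=
  ∀ k ∈ Ioc m N, T k ≤ T m

open scoped Classical in
noncomputable def plissTimes [LE α] (T : ℕ → α) (s N : ℕ) : Finset ℕ :=
  {m ∈ Ico s N | IsPlissTime T N m}

theorem mem_plissTimes [LE α] {T : ℕ → α} {s N m : ℕ} :
    m ∈ plissTimes T s N ↔ m ∈ Ico s N ∧ IsPlissTime T N m := by
  simp only [plissTimes, mem_filter]

theorem plissTimes_eq_insert [LE α] {T : ℕ → α} {s N : ℕ} (hsN : s < N)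
    (hs : IsPlissTime T N s) : plissTimes T s N = insert s (plissTimes T (s + 1) N) := by
  classical
  rw [plissTimes, ← insert_Ico_add_one_left_eq_Ico hsN, filter_insert, if_pos hs, plissTimes]

theorem plissTimes_eq_of_not_isPlissTime [LE α] {T : ℕ → α} {s N : ℕ} (hsN : s < N)
    (hs : ¬IsPlissTime T N s) : plissTimes T s N = plissTimes T (s + 1) N := by
  classical
  rw [plissTimes, ← insert_Ico_add_one_left_eq_Ico hsN, filter_insert, if_neg hs, plissTimes]

theorem le_add_card_plissTimes_nsmul [AddCommGroup α] [LinearOrder α] [IsOrderedAddMonoid α]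
    {T : ℕ → α} {A : α} {s N : ℕ} (hsN : s ≤ N)
    (hstep : ∀ j ∈ Ico s N, T j ≤ T (j + 1) + A) :
    ∀ k ∈ Icc s N, T k ≤ T N + #(plissTimes T s N) • A := by
  induction hsN using Nat.decreasingInduction with
  | self =>
    intro k hk
    simp [plissTimes, show k = N by simpa using hk]
  | of_succ s hsN ih =>
    have hnext : ∀ k ∈ Ioc s N, T k ≤ T N + #(plissTimes T (s + 1) N) • A := fun k hk =>
      ih (fun j hj => hstep j (Ico_subset_Ico_left s.le_succ hj)) k
        (by simpa [Nat.succ_le_iff] using hk)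
    intro k hk
    have hk' : k = s ∨ k ∈ Ioc s N := by
      rcases (mem_Icc.1 hk).1.eq_or_lt with rfl | hsk
      exacts [Or.inl rfl, Or.inr (mem_Ioc.2 ⟨hsk, (mem_Icc.1 hk).2⟩)]
    by_cases hs : IsPlissTime T N s
    · rw [plissTimes_eq_insert hsN hs, card_insert_of_notMem (by simp [mem_plissTimes]),
        succ_nsmul, ← add_assoc]
      have hTs : T s ≤ T N + #(plissTimes T (s + 1) N) • A + A :=
        (hstep s (mem_Ico.2 ⟨le_rfl, hsN⟩)).trans
          ((add_le_add_iff_right A).2 (hnext (s + 1) (mem_Ioc.2 ⟨s.lt_succ_self, hsN⟩)))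
      rcases hk' with rfl | hk'
      exacts [hTs, (hs k hk').trans hTs]
    · rw [plissTimes_eq_of_not_isPlissTime hsN hs]
      rcases hk' with rfl | hk'
      · obtain ⟨k', hk', hlt⟩ : ∃ k' ∈ Ioc k N, T k < T k' := by
          simpa [IsPlissTime, and_assoc] using hs
        exact hlt.le.trans (hnext k' hk')
      · exact hnext k hk'

end PlissTimes

theorem prod_le_pow_card_of_sum_log_sub_nonpos {ι : Type*} {s : Finset ι} {f : ι → ℝ}
    {γ : ℝ} (hf : ∀ i ∈ s, 0 < f i) (hγ : 0 < γ)
    (h : ∑ i ∈ s, (log (f i) - log γ) ≤ 0) :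
    ∏ i ∈ s, f i ≤ γ ^ #s := by
  rw [← log_le_log_iff (prod_pos hf) (pow_pos hγ _), log_prod fun i hi => (hf i hi).ne',
    log_pow]
  rw [sum_sub_distrib, sum_const, nsmul_eq_mul] at h
  linarith

noncomputable def logPartialSum (x : ℕ → ℝ) (γ : ℝ) (j : ℕ) : ℝ :=
  ∑ i ∈ range j, (log (x i) - log γ)

theorem prod_Icc_lt_pow_of_isPlissTime {x : ℕ → ℝ} {γ : ℝ} (hγ : 0 < γ) (hγ_lt : γ < 1)
    {n m k : ℕ} (hx : ∀ i ≤ n, 0 < x i) (hm : IsPlissTime (logPartialSum x γ) (n + 1) m)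
    (hmk : m ≤ k) (hkn : k ≤ n) : ∏ i ∈ Icc m k, x i < γ ^ (k - m) := by
  have hsum : ∑ i ∈ Icc m k, (log (x i) - log γ) ≤ 0 := by
    have := hm (k + 1) (mem_Ioc.2 ⟨by omega, by omega⟩)
    rw [← Ico_add_one_right_eq_Icc, sum_Ico_eq_sub _ (by omega)]
    exact sub_nonpos.2 this
  calc ∏ i ∈ Icc m k, x i ≤ γ ^ #(Icc m k) :=
        prod_le_pow_card_of_sum_log_sub_nonpos
          (fun i hi => hx i ((mem_Icc.1 hi).2.trans hkn)) hγ hsum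
    _ < γ ^ (k - m) := by
        rw [Nat.card_Icc]
        exact pow_lt_pow_right_of_lt_one₀ hγ hγ_lt (by omega)

theorem sub_lt_card_plissTimes_mul {x : ℕ → ℝ} {b γ₀ γ₁ : ℝ} {n : ℕ} (hb : 0 < b)
    (hx : ∀ i ≤ n, b⁻¹ < x i) (hprod : ∏ i ∈ range (n + 1), x i < γ₀ ^ n) :
    n * (log γ₁ - log γ₀) - (|log b| + |log γ₁|) <
      #(plissTimes (logPartialSum x γ₁) 1 (n + 1)) * (|log b| + |log γ₁|) := by
  have hxpos : ∀ i ∈ range (n + 1), 0 < x i := fun i hi =>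
    (inv_pos.2 hb).trans (hx i (Nat.lt_succ_iff.1 (mem_range.1 hi)))
  have hlogx : ∀ i ≤ n, -|log b| < log (x i) := fun i hi => by
    have := log_lt_log (inv_pos.2 hb) (hx i hi)
    rw [log_inv] at this
    linarith [le_abs_self (log b)]
  have hstep : ∀ j ∈ Ico 1 (n + 1),
      logPartialSum x γ₁ j ≤ logPartialSum x γ₁ (j + 1) + (|log b| + |log γ₁|) := by
    intro j hj
    simp only [logPartialSum, sum_range_succ]
    linarith [hlogx j (Nat.lt_succ_iff.1 (mem_Ico.1 hj).2), le_abs_self (log γ₁)]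
  have hlogprod : ∑ i ∈ range (n + 1), log (x i) < n * log γ₀ := by
    rw [← log_prod fun i hi => (hxpos i hi).ne', ← log_pow]
    exact log_lt_log (prod_pos hxpos) hprod
  have hcount := le_add_card_plissTimes_nsmul (by omega) hstep 1 (by simp)
  simp only [logPartialSum, sum_range_one, sum_sub_distrib, sum_const, card_range,
    nsmul_eq_mul] at hcount
  push_cast at hcount
  linarith [hlogx 0 n.zero_le, abs_nonneg (log γ₁)]

/-- Pliss lemma. -/
theorem pliss_lemma (γ₀ γ₁ a : ℝ) (h0 : 0 < γ₀) (h01 : γ₀ < γ₁) (h1 : γ₁ < 1) (ha : 0 < a) :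
    ∃ (n₀ : ℕ) (l : ℝ), 0 < l ∧
      ∀ (n : ℕ) (aseq : ℕ → ℝ), n₀ < n →
        (∀ i ≤ n, a⁻¹ < aseq i ∧ aseq i < a) →
        (∏ i ∈ Finset.range (n+1), aseq i) < γ₀ ^ n →
        ∃ (r : ℕ) (ns : Fin r → ℕ), StrictMono ns ∧
          (∀ j, 1 ≤ ns j ∧ ns j ≤ n) ∧ l * n < (r : ℝ) ∧
          ∀ j, ∀ k, ns j ≤ k → k ≤ n →
            (∏ i ∈ Finset.Icc (ns j) k, aseq i) < γ₁ ^ (k - ns j) := by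
  have hL : log γ₀ < log γ₁ := log_lt_log h0 h01
  set A := |log a| + |log γ₁|
  have hA : 0 < A := by
    linarith [abs_nonneg (log a), abs_pos.2 (log_neg (h0.trans h01) h1).ne]
  refine ⟨⌈2 * A / (log γ₁ - log γ₀)⌉₊, (log γ₁ - log γ₀) / (2 * A),
    div_pos (by linarith) (by positivity), fun n x hn hx hprod => ?_⟩
  have hcount := sub_lt_card_plissTimes_mul ha (fun i hi => (hx i hi).1) hprod (γ₁ := γ₁)
  set G := plissTimes (logPartialSum x γ₁) 1 (n + 1)
  have hmemG (j : Fin #G) := mem_plissTimes.1 (G.orderEmbOfFin_mem rfl j)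
  refine ⟨#G, G.orderEmbOfFin rfl, (G.orderEmbOfFin rfl).strictMono, fun j => ?_, ?_,
    fun j k => prod_Icc_lt_pow_of_isPlissTime (h0.trans h01) h1
      (fun i hi => (inv_pos.2 ha).trans (hx i hi).1) (hmemG j).2⟩
  · have := mem_Ico.1 (hmemG j).1
    omega
  · have hnA : 2 * A < n * (log γ₁ - log γ₀) := by
      rw [← div_lt_iff₀ (by linarith)]
      exact Nat.lt_of_ceil_lt hn
    rw [div_mul_eq_mul_div, div_lt_iff₀ (by positivity)]
    linarith
end

section
/- Suppose a product of 2×2 upper-triangular real matrices M_{n-1}···M₀ = [[A_n,B_n],[0,D_n]] satisfies: |kᵢ| < λ₀ and |gᵢ| < b for all i, |A_n| > λ₁ⁿ for all n > n₀, and ∏ᵢ₌₀ᵐ |fᵢ| > R₀⁻¹ for all m < n₀, where 0 < λ₀ < λ₁ < 1, b > 0, R₀ > 0. Then for all n > n₀, |B_n| < |A_n|·( R₀·b·n₀/(1−λ₀) + b/(λ₁−λ₀) ). -/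
/-!
Writing `A m = ∏_{i<m} f i`, the `j`-th summand of `B_n` is `g j · ∏_{i<j} k i · A n / A (j+1)`,
so it is at most `b λ₀^j |A n| / |A (j+1)|`. For `j < n₀` the hypothesis on the first partial
products gives `1 / |A (j+1)| < R₀`; for `j ≥ n₀` we have `|A (j+1)| > λ₁^(j+1)`, and the summands
are dominated by the geometric series `b |A n| / λ₁ · (λ₀/λ₁)^j`, whose sum is below
`b |A n| / (λ₁ - λ₀)`.
-/

open Finset

lemma geom_sum_Ico_lt_inv_one_sub {K : Type*} [Field K] [LinearOrder K] [IsStrictOrderedRing K]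
    {x : K} (hx₀ : 0 < x) (hx₁ : x < 1) {m n : ℕ} (hmn : m ≤ n) :
    ∑ i ∈ Ico m n, x ^ i < (1 - x)⁻¹ := by
  rw [geom_sum_Ico' hx₁.ne hmn, div_eq_mul_inv]
  have : x ^ m - x ^ n < 1 := by linarith [pow_le_one₀ hx₀.le hx₁.le (n := m), pow_pos hx₀ n]
  exact mul_lt_of_lt_one_left (inv_pos.2 (sub_pos.2 hx₁)) this

lemma prod_Ico_eq_div {K : Type*} [Field K] (f : ℕ → K) {m n : ℕ} (hmn : m ≤ n)
    (hm : ∏ i ∈ range m, f i ≠ 0) :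
    ∏ i ∈ Ico m n, f i = (∏ i ∈ range n, f i) / ∏ i ∈ range m, f i :=
  eq_div_of_mul_eq hm (by rw [mul_comm, prod_range_mul_prod_Ico f hmn])

/-- The `j`-th summand of the upper-right entry `B_n` of `M_{n-1} ⋯ M_0`. -/
def offDiagTerm (f g k : ℕ → ℝ) (n j : ℕ) : ℝ :=
  g j * (∏ i ∈ range j, k i) * ∏ i ∈ Ico (j + 1) n, f i

section Bounds

variable {f g k : ℕ → ℝ} {lam b : ℝ}

lemma abs_offDiagTerm_le (hk : ∀ i, |k i| ≤ lam) (hg : ∀ i, |g i| ≤ b) {n j : ℕ} (hjn : j < n)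
    {L : ℝ} (hL : 0 < L) (hLA : L ≤ |∏ i ∈ range (j + 1), f i|) :
    |offDiagTerm f g k n j| ≤ b * lam ^ j * (|∏ i ∈ range n, f i| / L) := by
  have hA : ∏ i ∈ range (j + 1), f i ≠ 0 := abs_pos.1 (hL.trans_le hLA)
  rw [offDiagTerm, prod_Ico_eq_div f hjn hA, abs_mul, abs_mul, abs_div, abs_prod]
  have hk' : ∏ i ∈ range j, |k i| ≤ lam ^ j := by
    simpa using prod_le_prod (s := range j) (fun i _ => abs_nonneg (k i)) (fun i _ => hk i)
  have hb : 0 ≤ b := (abs_nonneg _).trans (hg 0)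
  have hlam : 0 ≤ lam := (abs_nonneg _).trans (hk 0)
  gcongr
  exact hg j

lemma sum_range_abs_offDiagTerm_le (hlam₀ : 0 ≤ lam) (hlam₁ : lam ≤ 1) (hk : ∀ i, |k i| ≤ lam)
    (hg : ∀ i, |g i| ≤ b) {R : ℝ} (hR : 0 < R) {n₀ n : ℕ}
    (hf : ∀ m < n₀, R⁻¹ < |∏ i ∈ range (m + 1), f i|) (hn : n₀ ≤ n) :
    ∑ j ∈ range n₀, |offDiagTerm f g k n j| ≤ n₀ * (b * R * |∏ i ∈ range n, f i|) := by
  have hb : 0 ≤ b := (abs_nonneg _).trans (hg 0)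
  have hterm : ∀ j ∈ range n₀, |offDiagTerm f g k n j| ≤ b * R * |∏ i ∈ range n, f i| := by
    intro j hj
    have hj := mem_range.1 hj
    calc |offDiagTerm f g k n j|
        ≤ b * lam ^ j * (|∏ i ∈ range n, f i| / R⁻¹) :=
          abs_offDiagTerm_le hk hg (by omega) (inv_pos.2 hR) (hf j hj).le
      _ ≤ b * 1 * (|∏ i ∈ range n, f i| / R⁻¹) := by gcongr; exact pow_le_one₀ hlam₀ hlam₁
      _ = b * R * |∏ i ∈ range n, f i| := by rw [div_inv_eq_mul]; ring
  simpa using sum_le_card_nsmul _ _ _ hterm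

lemma sum_Ico_abs_offDiagTerm_lt {lam₁ : ℝ} (hlam₀ : 0 < lam) (hlam : lam < lam₁)
    (hk : ∀ i, |k i| ≤ lam) (hg : ∀ i, |g i| ≤ b) (hb : 0 < b) {n₀ n : ℕ}
    (hA : ∀ m, n₀ < m → lam₁ ^ m < |∏ i ∈ range m, f i|) (hn : n₀ < n) :
    ∑ j ∈ Ico n₀ n, |offDiagTerm f g k n j| < b * |∏ i ∈ range n, f i| / (lam₁ - lam) := by
  set A := |∏ i ∈ range n, f i|
  have hlam₁ : 0 < lam₁ := hlam₀.trans hlam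
  have hApos : 0 < A := (pow_pos hlam₁ n).trans (hA n hn)
  have hC : 0 < b * A / lam₁ := by positivity
  set r := lam / lam₁
  have hterm : ∀ j ∈ Ico n₀ n, |offDiagTerm f g k n j| ≤ b * A / lam₁ * r ^ j := by
    intro j hj
    have hj := mem_Ico.1 hj
    calc |offDiagTerm f g k n j| ≤ b * lam ^ j * (A / lam₁ ^ (j + 1)) :=
          abs_offDiagTerm_le hk hg hj.2 (pow_pos hlam₁ _) (hA (j + 1) (by omega)).le
      _ = b * A / lam₁ * r ^ j := by rw [div_pow, pow_succ]; field_simp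
  calc ∑ j ∈ Ico n₀ n, |offDiagTerm f g k n j|
      ≤ ∑ j ∈ Ico n₀ n, b * A / lam₁ * r ^ j := sum_le_sum hterm
    _ = b * A / lam₁ * ∑ j ∈ Ico n₀ n, r ^ j := (mul_sum _ _ _).symm
    _ < b * A / lam₁ * (1 - r)⁻¹ := by
        gcongr
        exact geom_sum_Ico_lt_inv_one_sub (div_pos hlam₀ hlam₁) ((div_lt_one hlam₁).2 hlam) hn.le
    _ = b * A / (lam₁ - lam) := by
        have : lam₁ - lam ≠ 0 := (sub_pos.2 hlam).ne'
        simp only [r]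
        field_simp

end Bounds

theorem triangular_offdiagonal_bound (f g k : ℕ → ℝ) (lam₀ lam₁ b R₀ : ℝ) (n₀ : ℕ)
    (h00 : 0 < lam₀) (h01 : lam₀ < lam₁) (h11 : lam₁ < 1) (hb : 0 < b) (hR : 0 < R₀)
    (hk : ∀ i, |k i| < lam₀) (hg : ∀ i, |g i| < b)
    (hA : ∀ n, n₀ < n → lam₁ ^ n < |∏ i ∈ Finset.range n, f i|)
    (hf : ∀ m, m < n₀ → R₀⁻¹ < ∏ i ∈ Finset.range (m+1), |f i|) :
    ∀ n, n₀ < n →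
      |∑ j ∈ Finset.range n,
          g j * (∏ i ∈ Finset.range j, k i) * (∏ i ∈ Finset.Ico (j+1) n, f i)|
        < |∏ i ∈ Finset.range n, f i| * (R₀ * b * n₀ / (1 - lam₀) + b / (lam₁ - lam₀)) := by
  intro n hn
  have hk' i := (hk i).le
  have hg' i := (hg i).le
  have hf' : ∀ m < n₀, R₀⁻¹ < |∏ i ∈ range (m + 1), f i| := by simpa only [abs_prod] using hf
  have head := sum_range_abs_offDiagTerm_le h00.le (h01.trans h11).le hk' hg' hR hf' hn.le
  have tail := sum_Ico_abs_offDiagTerm_lt h00 h01 hk' hg' hb hA hn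
  set A := |∏ i ∈ range n, f i|
  have head' : (n₀ : ℝ) * (b * R₀ * A) ≤ A * (R₀ * b * n₀ / (1 - lam₀)) :=
    calc (n₀ : ℝ) * (b * R₀ * A) ≤ n₀ * (b * R₀ * A) / (1 - lam₀) :=
          le_div_self (by positivity) (by linarith) (by linarith)
      _ = A * (R₀ * b * n₀ / (1 - lam₀)) := by ring
  calc _ ≤ ∑ j ∈ range n, |offDiagTerm f g k n j| := abs_sum_le_sum_abs _ _
    _ = ∑ j ∈ range n₀, |offDiagTerm f g k n j| + ∑ j ∈ Ico n₀ n, |offDiagTerm f g k n j| :=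
        (sum_range_add_sum_Ico _ hn.le).symm
    _ < A * (R₀ * b * n₀ / (1 - lam₀)) + A * (b / (lam₁ - lam₀)) := by
        rw [← mul_div_assoc A b, mul_comm A b]
        exact add_lt_add_of_le_of_lt (head.trans head') tail
    _ = _ := (mul_add _ _ _).symm
end

section
/- Under the hypotheses of the triangular-product estimate (|kᵢ| < λ₀, |gᵢ| < b, |A_n| > λ₁ⁿ for n > n₀, ∏ᵢ₌₀ᵐ|fᵢ| > R₀⁻¹ for m < n₀), if γ₀ > 0 is small enough that 1 − γ₀·b·(R₀·n₀+1)/(λ₁−λ₀) > 1/2, then for all |γ| ≤ γ₀ and all n > n₀, the vector v_n = (A_n + γB_n, γD_n) satisfies |γD_n|/|A_n + γB_n| < 2·(λ₀/λ₁)ⁿ·γ₀. -/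
/-!
Write `P_j = ∏_{i ≤ j} |fᵢ|`. Since `A_n` is the product of `P_j` and the tail `∏_{j < i < n} fᵢ`,
the `j`-th summand of `B_n` is at most `b · λ₀ʲ / P_j · |A_n|`. The hypotheses bound `1 / P_j` by
`R₀` for `j < n₀` and by `λ₁^{-(j+1)}` afterwards, so the weights `λ₀ʲ / P_j` sum to at most
`R₀ n₀ + 1 / (λ₁ - λ₀)` (a geometric series of ratio `λ₀ / λ₁` for the tail). Hence `|γ B_n|` is
less than `|A_n| / 2`, so `|A_n + γ B_n| > λ₁ⁿ / 2`, while `|γ D_n| ≤ γ₀ λ₀ⁿ`.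
-/

open Finset

theorem abs_prod_range_le_pow {k : ℕ → ℝ} {c : ℝ} (hk : ∀ i, |k i| ≤ c) (n : ℕ) :
    |∏ i ∈ range n, k i| ≤ c ^ n := by
  rw [abs_prod]
  simpa using prod_le_prod (s := range n) (fun i _ => abs_nonneg (k i)) (fun i _ => hk i)

theorem abs_prod_Ico_eq_div (f : ℕ → ℝ) {j n : ℕ} (hjn : j ≤ n)
    (hP : ∏ i ∈ range j, |f i| ≠ 0) :
    |∏ i ∈ Ico j n, f i| = |∏ i ∈ range n, f i| / ∏ i ∈ range j, |f i| := by
  rw [eq_div_iff hP, abs_prod, abs_prod, mul_comm, prod_range_mul_prod_Ico _ hjn]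

theorem sum_Ico_pow_div_pow_succ_le {a c : ℝ} (ha : 0 ≤ a) (hac : a < c) (m n : ℕ) :
    ∑ j ∈ Ico m n, a ^ j / c ^ (j + 1) ≤ 1 / (c - a) := by
  have hc : 0 < c := ha.trans_lt hac
  have hr : a / c < 1 := (div_lt_one hc).2 hac
  have hr0 : 0 ≤ a / c := div_nonneg ha hc.le
  calc ∑ j ∈ Ico m n, a ^ j / c ^ (j + 1) = (∑ j ∈ Ico m n, (a / c) ^ j) / c := by
        rw [sum_div]
        refine sum_congr rfl fun j _ => ?_
        rw [div_pow, pow_succ, div_div]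
    _ ≤ (1 / (1 - a / c)) / c := by
        gcongr
        exact (geom_sum_Ico_le_of_lt_one hr0 hr).trans
          (div_le_div_of_nonneg_right (pow_le_one₀ hr0 hr.le) (by linarith))
    _ = 1 / (c - a) := by
        field_simp

theorem sum_pow_div_prod_abs_le {f : ℕ → ℝ} {lam₀ lam₁ R₀ : ℝ} {n₀ n : ℕ}
    (h0 : 0 ≤ lam₀) (h01 : lam₀ < lam₁) (h1 : lam₀ ≤ 1) (hR : 0 < R₀)
    (hA : ∀ m, n₀ < m → lam₁ ^ m < ∏ i ∈ range m, |f i|)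
    (hf : ∀ m, m < n₀ → R₀⁻¹ < ∏ i ∈ range (m + 1), |f i|) (hn : n₀ ≤ n) :
    ∑ j ∈ range n, lam₀ ^ j / ∏ i ∈ range (j + 1), |f i| ≤ R₀ * n₀ + 1 / (lam₁ - lam₀) := by
  rw [← sum_range_add_sum_Ico _ hn]
  gcongr ?_ + ?_
  · calc _ ≤ ∑ _j ∈ range n₀, R₀ := sum_le_sum fun j hj => ?_
      _ = R₀ * n₀ := by simp [mul_comm]
    have hPj := hf j (mem_range.1 hj)
    calc lam₀ ^ j / _ ≤ 1 / ∏ i ∈ range (j + 1), |f i| :=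
          div_le_div_of_nonneg_right (pow_le_one₀ h0 h1) ((inv_pos.2 hR).trans hPj).le
      _ ≤ R₀ := by rw [one_div]; exact (inv_lt_of_inv_lt₀ hR hPj).le
  · calc _ ≤ ∑ j ∈ Ico n₀ n, lam₀ ^ j / lam₁ ^ (j + 1) := sum_le_sum fun j hj => ?_
      _ ≤ _ := sum_Ico_pow_div_pow_succ_le h0 h01 n₀ n
    have hPj := hA (j + 1) (Nat.lt_succ_of_le (mem_Ico.1 hj).1)
    exact div_le_div_of_nonneg_left (pow_nonneg h0 j) (pow_pos (h0.trans_lt h01) _) hPj.le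

theorem abs_sum_le_mul_sum_pow_div_prod {f g k : ℕ → ℝ} {lam₀ b : ℝ} (hk : ∀ i, |k i| ≤ lam₀)
    (hg : ∀ i, |g i| ≤ b) {n : ℕ} (hA : ∏ i ∈ range n, f i ≠ 0) :
    |∑ j ∈ range n, g j * (∏ i ∈ range j, k i) * ∏ i ∈ Ico (j + 1) n, f i| ≤
      b * |∏ i ∈ range n, f i| * ∑ j ∈ range n, lam₀ ^ j / ∏ i ∈ range (j + 1), |f i| := by
  have hb : 0 ≤ b := (abs_nonneg _).trans (hg 0)
  rw [mul_sum]
  refine (abs_sum_le_sum_abs _ _).trans (sum_le_sum fun j hj => ?_)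
  have hjn : j + 1 ≤ n := mem_range.1 hj
  have hP : ∏ i ∈ range (j + 1), |f i| ≠ 0 := by
    rw [← abs_prod, abs_ne_zero, prod_ne_zero_iff]
    exact fun i hi => prod_ne_zero_iff.1 hA i (mem_range.2 ((mem_range.1 hi).trans_le hjn))
  rw [abs_mul, abs_mul, abs_prod_Ico_eq_div f hjn hP]
  calc |g j| * |∏ i ∈ range j, k i| * (|∏ i ∈ range n, f i| / ∏ i ∈ range (j + 1), |f i|)
      ≤ b * lam₀ ^ j * (|∏ i ∈ range n, f i| / ∏ i ∈ range (j + 1), |f i|) := by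
        gcongr
        · exact hg j
        · exact abs_prod_range_le_pow hk j
    _ = _ := by ring

theorem abs_sum_triangular_le {f g k : ℕ → ℝ} {lam₀ lam₁ b R₀ : ℝ} {n₀ n : ℕ}
    (h0 : 0 ≤ lam₀) (h01 : lam₀ < lam₁) (h11 : lam₁ ≤ 1) (hR : 0 < R₀)
    (hk : ∀ i, |k i| ≤ lam₀) (hg : ∀ i, |g i| ≤ b)
    (hA : ∀ m, n₀ < m → lam₁ ^ m < |∏ i ∈ range m, f i|)
    (hf : ∀ m, m < n₀ → R₀⁻¹ < ∏ i ∈ range (m + 1), |f i|) (hn : n₀ < n) :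
    |∑ j ∈ range n, g j * (∏ i ∈ range j, k i) * ∏ i ∈ Ico (j + 1) n, f i| ≤
      b * (R₀ * n₀ + 1) / (lam₁ - lam₀) * |∏ i ∈ range n, f i| := by
  have hb : 0 ≤ b := (abs_nonneg _).trans (hg 0)
  have hgap : 0 < lam₁ - lam₀ := sub_pos.2 h01
  have hA0 : ∏ i ∈ range n, f i ≠ 0 :=
    abs_pos.1 ((pow_pos (h0.trans_lt h01) n).trans (hA n hn))
  have hweights := sum_pow_div_prod_abs_le (f := f) h0 h01 (by linarith) hR
    (fun m hm => by simpa only [abs_prod] using hA m hm) hf hn.le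
  have hconst : R₀ * n₀ + 1 / (lam₁ - lam₀) ≤ (R₀ * n₀ + 1) / (lam₁ - lam₀) := by
    rw [add_div]
    gcongr
    exact le_div_self (by positivity) hgap (by linarith)
  calc _ ≤ b * |∏ i ∈ range n, f i| * (R₀ * n₀ + 1 / (lam₁ - lam₀)) :=
        (abs_sum_le_mul_sum_pow_div_prod hk hg hA0).trans (by gcongr)
    _ ≤ b * |∏ i ∈ range n, f i| * ((R₀ * n₀ + 1) / (lam₁ - lam₀)) := by gcongr
    _ = _ := by ring

theorem half_abs_lt_abs_add_of_abs_le {x y ε : ℝ} (hx : x ≠ 0) (hε : ε < 1 / 2)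
    (hy : |y| ≤ ε * |x|) :
    |x| / 2 < |x + y| := by
  have : ε * |x| < 1 / 2 * |x| := mul_lt_mul_of_pos_right hε (abs_pos.2 hx)
  linarith [abs_sub_abs_le_abs_add x y]

theorem cone_field_invariance_general (f g k : ℕ → ℝ) (lam₀ lam₁ b R₀ γ₀ : ℝ) (n₀ : ℕ)
    (h01 : lam₀ < lam₁) (h11 : lam₁ < 1) (hR : 0 < R₀)
    (hk : ∀ i, |k i| < lam₀) (hg : ∀ i, |g i| < b)
    (hA : ∀ n, n₀ < n → lam₁ ^ n < |∏ i ∈ Finset.range n, f i|)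
    (hf : ∀ m, m < n₀ → R₀⁻¹ < ∏ i ∈ Finset.range (m+1), |f i|)
    (hγ0 : 0 < γ₀)
    (hsmall : 1/2 < 1 - γ₀ * b * (R₀ * n₀ + 1) / (lam₁ - lam₀)) :
    ∀ γ : ℝ, |γ| ≤ γ₀ → ∀ n, n₀ < n →
      |γ * ∏ i ∈ Finset.range n, k i| /
          |(∏ i ∈ Finset.range n, f i) +
            γ * ∑ j ∈ Finset.range n,
              g j * (∏ i ∈ Finset.range j, k i) * (∏ i ∈ Finset.Ico (j+1) n, f i)|
        < 2 * (lam₀ / lam₁) ^ n * γ₀ := by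
  intro γ hγ n hn
  set A := ∏ i ∈ range n, f i
  set B := ∑ j ∈ range n, g j * (∏ i ∈ range j, k i) * ∏ i ∈ Ico (j + 1) n, f i
  have h00 : 0 < lam₀ := (abs_nonneg _).trans_lt (hk 0)
  have hlam₁n : 0 < lam₁ ^ n := pow_pos (h00.trans h01) n
  have hAn : lam₁ ^ n < |A| := hA n hn
  have hB : |B| ≤ b * (R₀ * n₀ + 1) / (lam₁ - lam₀) * |A| :=
    abs_sum_triangular_le h00.le h01 h11.le hR (fun i => (hk i).le) (fun i => (hg i).le) hA hf hn
  have hγB : |γ * B| ≤ γ₀ * b * (R₀ * n₀ + 1) / (lam₁ - lam₀) * |A| := by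
    rw [abs_mul]
    exact (mul_le_mul hγ hB (abs_nonneg _) hγ0.le).trans_eq (by ring)
  have hden : lam₁ ^ n / 2 < |A + γ * B| :=
    (by linarith : lam₁ ^ n / 2 < |A| / 2).trans
      (half_abs_lt_abs_add_of_abs_le (abs_pos.1 (hlam₁n.trans hAn)) (by linarith) hγB)
  have hnum : |γ * ∏ i ∈ range n, k i| ≤ γ₀ * lam₀ ^ n := by
    rw [abs_mul]
    exact mul_le_mul hγ (abs_prod_range_le_pow (fun i => (hk i).le) n) (abs_nonneg _) hγ0.le
  calc |γ * ∏ i ∈ range n, k i| / |A + γ * B| ≤ γ₀ * lam₀ ^ n / |A + γ * B| := by gcongr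
    _ < γ₀ * lam₀ ^ n / (lam₁ ^ n / 2) := by gcongr
    _ = 2 * (lam₀ / lam₁) ^ n * γ₀ := by
        rw [div_pow]
        field_simp

theorem cone_field_invariance (f g k : ℕ → ℝ) (lam₀ lam₁ b R₀ γ₀ : ℝ) (n₀ : ℕ)
    (h00 : 0 < lam₀) (h01 : lam₀ < lam₁) (h11 : lam₁ < 1) (hb : 0 < b) (hR : 0 < R₀)
    (hk : ∀ i, |k i| < lam₀) (hg : ∀ i, |g i| < b)
    (hA : ∀ n, n₀ < n → lam₁ ^ n < |∏ i ∈ Finset.range n, f i|)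
    (hf : ∀ m, m < n₀ → R₀⁻¹ < ∏ i ∈ Finset.range (m+1), |f i|)
    (hγ0 : 0 < γ₀)
    (hsmall : 1/2 < 1 - γ₀ * b * (R₀ * n₀ + 1) / (lam₁ - lam₀)) :
    ∀ γ : ℝ, |γ| ≤ γ₀ → ∀ n, n₀ < n →
      |γ * ∏ i ∈ Finset.range n, k i| /
          |(∏ i ∈ Finset.range n, f i) +
            γ * ∑ j ∈ Finset.range n,
              g j * (∏ i ∈ Finset.range j, k i) * (∏ i ∈ Finset.Ico (j+1) n, f i)|
        < 2 * (lam₀ / lam₁) ^ n * γ₀ :=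
  cone_field_invariance_general f g k lam₀ lam₁ b R₀ γ₀ n₀ h01 h11 hR hk hg hA hf hγ0 hsmall
end
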